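/- (Lemma 6.3: the case v₂(α²) < v₂(4yz).) For a natural number k, consider subsets of ℤ_[2]³ (coordinates (α, y, z)) all constrained by: y is a unit, ‖α²‖ > ‖4yz‖, and α² + 4yz = 2^k·u for some unit u ∈ ℤ_[2]. Then: (1) with the additional constraint 8 ∣ u − 1, the μ³-measure equals 2^{-(3k/2+3)} if k is even and 0 if k is odd; (2) with the additional constraint 8 ∣ u − 5, the μ³-measure equals 2^{-(3k/2+3)} if k is even and 0 if k is odd; (3) with the additional constraint 4 ∣ u − 3, the μ³-measure equals 2^{-(3k/2+2)} if k is even and k ≥ 2, and 0 if k is odd or k = 0; (4) with no additional constraint on u, the μ³-measure equals 0 whenever k is odd. -/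

import Mathlib

/-!
If `‖4yz‖ < ‖α²‖`, then `‖α²‖ = ‖α² + 4yz‖ = ‖2^k u‖ = 2^{-k}`, so `k = 2m` is even and
`α = 2^m a` with `a` a unit. Since `a² ≡ 1 (mod 8)`, the unit part `u = a² + 4yz / 2^{2m}`
satisfies `u ≡ c (mod q)` for `q ∣ 8` exactly when `2^{2m} q ∣ 4yz - 2^{2m} (c - 1)`. For the
classes `1, 5 (mod 8)` and `3 (mod 4)`, and `y` a unit, this is a congruence on `z` alone
(`z ≡ 0` or `2^{2m} (mod 2^{2m+1})`, resp. `z ≡ 2^{2m-1} (mod 2^{2m})`, impossible for `m = 0`).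
So each set is a product of `{‖α‖ = 2^{-m}}`, the units and a coset of `2^j ℤ_[2]`, and its
measure follows from `μ (2^j ℤ_[2]) = 2^{-j}`, which holds because `2^j ℤ_[2]` is an additive
subgroup of index `2^j`.
-/

open MeasureTheory
open scoped ENNReal

noncomputable instance : MeasurableSpace ℤ_[2] := borel ℤ_[2]
instance : BorelSpace ℤ_[2] := ⟨rfl⟩

open PadicInt

theorem dvd_mul_sub_iff_of_dvd {R : Type*} [CommRing R] {q y z d : R} (hy : IsUnit y)
    (hd : q ∣ d * (y - 1)) : q ∣ y * z - d ↔ q ∣ z - d := by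
  rw [show y * z - d = y * (z - d) + d * (y - 1) by ring, dvd_add_left hd, hy.dvd_mul_left]

namespace PadicInt

variable {p : ℕ} [Fact p.Prime]

theorem isUnit_iff_not_dvd {x : ℤ_[p]} : IsUnit x ↔ ¬(p : ℤ_[p]) ∣ x := by
  rw [← norm_lt_one_iff_dvd, ← not_isUnit_iff, not_not]

theorem dvd_iff_toZMod_eq_zero {x : ℤ_[p]} : (p : ℤ_[p]) ∣ x ↔ toZMod x = 0 := by
  rw [← RingHom.mem_ker, ker_toZMod, maximalIdeal_eq_span_p, Ideal.mem_span_singleton]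

theorem pow_dvd_iff_norm_le {n : ℕ} {x : ℤ_[p]} :
    (p : ℤ_[p]) ^ n ∣ x ↔ ‖x‖ ≤ (p : ℝ) ^ (-n : ℤ) := by
  rw [norm_le_pow_iff_mem_span_pow, Ideal.mem_span_singleton]

theorem norm_lt_norm_pow_iff {j : ℕ} {x : ℤ_[p]} :
    ‖x‖ < ‖(p : ℤ_[p]) ^ j‖ ↔ (p : ℤ_[p]) ^ (j + 1) ∣ x := by
  rw [norm_p_pow, pow_dvd_iff_norm_le, norm_le_pow_iff_norm_lt_pow_add_one]
  push_cast
  ring_nf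

theorem pow_dvd_and_not_pow_succ_dvd_iff {m : ℕ} {x : ℤ_[p]} :
    ((p : ℤ_[p]) ^ m ∣ x ∧ ¬(p : ℤ_[p]) ^ (m + 1) ∣ x) ↔
      ∃ a, IsUnit a ∧ x = (p : ℤ_[p]) ^ m * a := by
  have hcancel (a : ℤ_[p]) : (p : ℤ_[p]) ^ (m + 1) ∣ (p : ℤ_[p]) ^ m * a ↔ (p : ℤ_[p]) ∣ a := by
    have hp : (p : ℤ_[p]) ≠ 0 := Nat.cast_ne_zero.mpr (Fact.out : p.Prime).ne_zero
    rw [pow_succ, mul_dvd_mul_iff_left (pow_ne_zero m hp)]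
  constructor
  · rintro ⟨⟨a, rfl⟩, h⟩
    exact ⟨a, isUnit_iff_not_dvd.mpr ((hcancel a).not.mp h), rfl⟩
  · rintro ⟨a, ha, rfl⟩
    exact ⟨dvd_mul_right _ _, (hcancel a).not.mpr (isUnit_iff_not_dvd.mp ha)⟩

theorem norm_mul_of_isUnit {x a : ℤ_[p]} (ha : IsUnit a) : ‖x * a‖ = ‖x‖ := by
  rw [norm_mul, isUnit_iff.mp ha, mul_one]

section Haar

variable [MeasurableSpace ℤ_[p]] [BorelSpace ℤ_[p]] (μ : Measure ℤ_[p]) [μ.IsAddLeftInvariant]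
  [IsProbabilityMeasure μ]

theorem measurableSet_setOf_pow_dvd (n : ℕ) :
    MeasurableSet {x : ℤ_[p] | (p : ℤ_[p]) ^ n ∣ x} := by
  simp_rw [pow_dvd_iff_norm_le]
  exact measurableSet_le continuous_norm.measurable measurable_const

theorem measure_setOf_pow_dvd (n : ℕ) :
    μ {x : ℤ_[p] | (p : ℤ_[p]) ^ n ∣ x} = ((p : ℝ≥0∞) ^ n)⁻¹ := by
  let f := (toZModPow (p := p) n).toAddMonoidHom
  have hker : (f.ker : Set ℤ_[p]) = {x | (p : ℤ_[p]) ^ n ∣ x} := by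
    ext x
    simp [f, ← RingHom.mem_ker, ker_toZModPow, Ideal.mem_span_singleton]
  have hindex : f.ker.index = p ^ n := by
    rw [AddSubgroup.index_ker, AddMonoidHom.range_eq_top.mpr (ZMod.ringHom_surjective _)]
    simp
  have := f.ker.index_mul_measure (hker ▸ measurableSet_setOf_pow_dvd n) μ
  rw [hindex, hker, measure_univ] at this
  exact ENNReal.eq_inv_of_mul_eq_one_left (by simpa [mul_comm] using this)

theorem measure_setOf_pow_dvd_sub (n : ℕ) (c : ℤ_[p]) :
    μ {x : ℤ_[p] | (p : ℤ_[p]) ^ n ∣ x - c} = ((p : ℝ≥0∞) ^ n)⁻¹ := by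
  rw [← measure_setOf_pow_dvd μ n, ← measure_preimage_add_right μ c]
  simp only [Set.preimage_ofPred_eq, add_sub_cancel_right]

end Haar

end PadicInt

namespace TwoAdic

theorem isUnit_iff_not_two_dvd {x : ℤ_[2]} : IsUnit x ↔ ¬2 ∣ x := by
  simpa using isUnit_iff_not_dvd (p := 2) (x := x)

theorem isUnit_iff_two_dvd_sub_one {x : ℤ_[2]} : IsUnit x ↔ 2 ∣ x - 1 := by
  have h2 (y : ℤ_[2]) : 2 ∣ y ↔ toZMod y = 0 := by simpa using dvd_iff_toZMod_eq_zero (x := y)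
  rw [isUnit_iff_not_two_dvd, h2, h2, map_sub, map_one]
  generalize toZMod x = t
  revert t
  decide

theorem eight_dvd_sq_sub_one {a : ℤ_[2]} (ha : IsUnit a) : 8 ∣ a ^ 2 - 1 := by
  obtain ⟨b, hb⟩ := isUnit_iff_two_dvd_sub_one.mp ha
  have hb2 : 2 ∣ b * (b + 1) := by
    by_cases hbu : IsUnit b
    · obtain ⟨c, hc⟩ := isUnit_iff_two_dvd_sub_one.mp hbu
      exact Dvd.dvd.mul_left ⟨c + 1, by linear_combination hc⟩ b
    · exact Dvd.dvd.mul_right (not_not.mp (isUnit_iff_not_two_dvd.not.mp hbu)) _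
  rw [show a ^ 2 - 1 = 4 * (b * (b + 1)) by linear_combination (a + 1 + 2 * b) * hb,
    show (8 : ℤ_[2]) = 4 * 2 by norm_num]
  exact mul_dvd_mul_left 4 hb2

theorem norm_two_pow (n : ℕ) : ‖(2 : ℤ_[2]) ^ n‖ = 2⁻¹ ^ n := by
  simpa using norm_p_pow (p := 2) n

theorem norm_lt_norm_two_pow_iff {j : ℕ} {x : ℤ_[2]} :
    ‖x‖ < ‖(2 : ℤ_[2]) ^ j‖ ↔ 2 ^ (j + 1) ∣ x := by
  simpa using norm_lt_norm_pow_iff (p := 2) (j := j) (x := x)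

theorem exists_eq_two_pow_mul_of_norm_lt {α x u : ℤ_[2]} {k : ℕ} (hx : ‖x‖ < ‖α ^ 2‖)
    (hu : IsUnit u) (h : α ^ 2 + x = 2 ^ k * u) :
    ∃ m a, IsUnit a ∧ α = 2 ^ m * a ∧ k = 2 * m := by
  have hα : α ≠ 0 := by
    rintro rfl
    exact (norm_nonneg x).not_gt (by simpa using hx)
  have hspec : α = 2 ^ α.valuation * unitCoeff hα := by
    simpa [mul_comm] using unitCoeff_spec hα
  refine ⟨α.valuation, unitCoeff hα, Units.isUnit _, hspec, ?_⟩
  have hnorm : ‖(2 : ℤ_[2]) ^ k‖ = ‖(2 : ℤ_[2]) ^ (2 * α.valuation)‖ :=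
    calc ‖(2 : ℤ_[2]) ^ k‖ = ‖α ^ 2 + x‖ := by rw [h, norm_mul_of_isUnit hu]
      _ = ‖α ^ 2‖ := by rw [norm_add_eq_max_of_ne hx.ne', max_eq_left hx.le]
      _ = ‖(2 : ℤ_[2]) ^ (2 * α.valuation)‖ := by
        conv_lhs => rw [hspec]
        rw [mul_pow, norm_mul_of_isUnit ((Units.isUnit _).pow 2), ← pow_mul, mul_comm]
  rw [norm_two_pow, norm_two_pow] at hnorm
  exact pow_right_injective₀ (by norm_num) (by norm_num) hnorm

theorem norm_lt_and_exists_unit_iff_dvd {e : ℕ} {q s c x : ℤ_[2]} (hq : 2 ∣ q) (hs : q ∣ s - 1)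
    (hc : 2 ∣ c - 1) :
    (‖x‖ < ‖2 ^ e * s‖ ∧ ∃ u, IsUnit u ∧ 2 ^ e * s + x = 2 ^ e * u ∧ q ∣ u - c) ↔
      2 ^ e * q ∣ x - 2 ^ e * (c - 1) := by
  constructor
  · rintro ⟨-, u, -, h, hu⟩
    rw [show x - 2 ^ e * (c - 1) = 2 ^ e * ((u - c) - (s - 1)) by linear_combination h]
    exact mul_dvd_mul_left _ (dvd_sub hu hs)
  · rintro ⟨t, ht⟩
    have hx : x = 2 ^ e * ((c - 1) + q * t) := by linear_combination ht
    refine ⟨?_, s + (c - 1) + q * t, ?_, by linear_combination ht, ?_⟩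
    · rw [norm_mul_of_isUnit (isUnit_iff_two_dvd_sub_one.mpr (hq.trans hs)),
        norm_lt_norm_two_pow_iff, hx, pow_succ]
      exact mul_dvd_mul_left _ (dvd_add hc (hq.mul_right t))
    · rw [isUnit_iff_two_dvd_sub_one,
        show s + (c - 1) + q * t - 1 = (s - 1) + (c - 1) + q * t by ring]
      exact dvd_add (dvd_add (hq.trans hs) hc) (hq.mul_right t)
    · rw [show s + (c - 1) + q * t - c = (s - 1) + q * t by ring]
      exact dvd_add hs (dvd_mul_right q t)

theorem four_mul_dvd_four_mul_sub_iff {y z d : ℤ_[2]} {e : ℕ} (hy : IsUnit y)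
    (hd : 2 ^ (e + 1) ∣ d * (y - 1)) :
    4 * 2 ^ (e + 1) ∣ 4 * y * z - 4 * d ↔ 2 ^ (e + 1) ∣ z - d := by
  rw [mul_assoc, ← mul_sub, mul_dvd_mul_iff_left (by norm_num : (4 : ℤ_[2]) ≠ 0),
    dvd_mul_sub_iff_of_dvd hy hd]

theorem two_pow_succ_dvd_two_pow_mul_sub_one {y : ℤ_[2]} (hy : IsUnit y) (e : ℕ) :
    2 ^ (e + 1) ∣ 2 ^ e * (y - 1) :=
  pow_succ (2 : ℤ_[2]) e ▸ mul_dvd_mul_left _ (isUnit_iff_two_dvd_sub_one.mp hy)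

def sqDominantSet (k : ℕ) (P : ℤ_[2] → Prop) : Set (ℤ_[2] × ℤ_[2] × ℤ_[2]) :=
  {p | IsUnit p.2.1 ∧ ‖p.1 ^ 2‖ > ‖4 * p.2.1 * p.2.2‖ ∧ ∃ u : ℤ_[2], IsUnit u ∧
      p.1 ^ 2 + 4 * p.2.1 * p.2.2 = 2 ^ k * u ∧ P u}

theorem sqDominantSet_two_mul_add_one (m : ℕ) (P : ℤ_[2] → Prop) :
    sqDominantSet (2 * m + 1) P = ∅ := by
  refine Set.eq_empty_of_forall_notMem ?_
  rintro ⟨α, y, z⟩ ⟨-, hx, u, hu, h, -⟩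
  obtain ⟨m', -, -, -, hk⟩ := exists_eq_two_pow_mul_of_norm_lt hx hu h
  omega

theorem sqDominantSet_eq_prod {m : ℕ} {q c : ℤ_[2]} (hq : 2 ∣ q) (hq8 : q ∣ 8) (hc : 2 ∣ c - 1)
    {Z : Set ℤ_[2]}
    (hZ : ∀ y z, IsUnit y → (2 ^ (2 * m) * q ∣ 4 * y * z - 2 ^ (2 * m) * (c - 1) ↔ z ∈ Z)) :
    sqDominantSet (2 * m) (fun u => q ∣ u - c) =
      {x | 2 ^ m ∣ x ∧ ¬2 ^ (m + 1) ∣ x} ×ˢ ({y | IsUnit y} ×ˢ Z) := by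
  have key (a y z : ℤ_[2]) (ha : IsUnit a) (hy : IsUnit y) :
      (‖4 * y * z‖ < ‖(2 ^ m * a) ^ 2‖ ∧ ∃ u, IsUnit u ∧
        (2 ^ m * a) ^ 2 + 4 * y * z = 2 ^ (2 * m) * u ∧ q ∣ u - c) ↔ z ∈ Z := by
    rw [show (2 ^ m * a) ^ 2 = 2 ^ (2 * m) * a ^ 2 by ring,
      norm_lt_and_exists_unit_iff_dvd hq (hq8.trans (eight_dvd_sq_sub_one ha)) hc, hZ y z hy]
  have hshell (x : ℤ_[2]) : (2 ^ m ∣ x ∧ ¬2 ^ (m + 1) ∣ x) ↔ ∃ a, IsUnit a ∧ x = 2 ^ m * a := by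
    simpa using pow_dvd_and_not_pow_succ_dvd_iff (p := 2) (m := m) (x := x)
  ext ⟨α, y, z⟩
  simp only [sqDominantSet, Set.mem_ofPred_eq, Set.mem_prod, hshell]
  constructor
  · rintro ⟨hy, hx, u, hu, h, hP⟩
    obtain ⟨m', a, ha, rfl, hm⟩ := exists_eq_two_pow_mul_of_norm_lt hx hu h
    obtain rfl : m' = m := by omega
    exact ⟨⟨a, ha, rfl⟩, hy, (key a y z ha hy).mp ⟨hx, u, hu, h, hP⟩⟩
  · rintro ⟨⟨a, ha, rfl⟩, hy, hz⟩
    exact ⟨hy, (key a y z ha hy).mpr hz⟩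

section Haar

variable (μ : Measure ℤ_[2]) [μ.IsAddLeftInvariant] [IsProbabilityMeasure μ]

theorem measure_setOf_two_pow_dvd_sub (n : ℕ) (c : ℤ_[2]) :
    μ {x | 2 ^ n ∣ x - c} = (2 ^ n)⁻¹ := by
  simpa using measure_setOf_pow_dvd_sub (p := 2) μ n c

theorem measure_setOf_two_pow_dvd_and_not_dvd (m : ℕ) :
    μ {x : ℤ_[2] | 2 ^ m ∣ x ∧ ¬2 ^ (m + 1) ∣ x} = (2 ^ (m + 1))⁻¹ := by
  have hball (n : ℕ) : μ {x : ℤ_[2] | 2 ^ n ∣ x} = (2 ^ n)⁻¹ := by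
    simpa using measure_setOf_two_pow_dvd_sub μ n 0
  have hsub : {x : ℤ_[2] | 2 ^ (m + 1) ∣ x} ⊆ {x | 2 ^ m ∣ x} :=
    fun x hx => (pow_dvd_pow 2 m.le_succ).trans hx
  have hmeas : MeasurableSet {x : ℤ_[2] | 2 ^ (m + 1) ∣ x} := by
    simpa using measurableSet_setOf_pow_dvd (p := 2) (m + 1)
  change μ ({x | 2 ^ m ∣ x} \ {x | 2 ^ (m + 1) ∣ x}) = _
  rw [measure_sdiff hsub hmeas.nullMeasurableSet (measure_ne_top μ _), hball, hball]
  refine ENNReal.sub_eq_of_eq_add (by simp) ?_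
  rw [ENNReal.inv_pow, ENNReal.inv_pow, pow_succ, ← mul_add, ENNReal.inv_two_add_inv_two, mul_one]

theorem measure_setOf_isUnit : μ {x : ℤ_[2] | IsUnit x} = 2⁻¹ := by
  simpa [isUnit_iff_not_two_dvd] using measure_setOf_two_pow_dvd_and_not_dvd μ 0

theorem measure_sqDominantSet {m : ℕ} {q c : ℤ_[2]} (hq : 2 ∣ q) (hq8 : q ∣ 8) (hc : 2 ∣ c - 1)
    {Z : Set ℤ_[2]}
    (hZ : ∀ y z, IsUnit y → (2 ^ (2 * m) * q ∣ 4 * y * z - 2 ^ (2 * m) * (c - 1) ↔ z ∈ Z)) :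
    μ.prod (μ.prod μ) (sqDominantSet (2 * m) (fun u => q ∣ u - c)) = (2 ^ (m + 2))⁻¹ * μ Z := by
  rw [sqDominantSet_eq_prod hq hq8 hc hZ, Measure.prod_prod, Measure.prod_prod,
    measure_setOf_two_pow_dvd_and_not_dvd, measure_setOf_isUnit, ← mul_assoc,
    ← ENNReal.mul_inv (by simp) (by simp), ← pow_succ]

theorem measure_sqDominantSet_eight_dvd_sub_one (m : ℕ) :
    μ.prod (μ.prod μ) (sqDominantSet (2 * m) (fun u => 8 ∣ u - 1)) = (2 ^ (3 * m + 3))⁻¹ := by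
  rw [measure_sqDominantSet μ (Z := {z | 2 ^ (2 * m + 1) ∣ z - 0}) ⟨4, by norm_num⟩ dvd_rfl
    (by simp) fun y z hy => ?_, measure_setOf_two_pow_dvd_sub,
    ← ENNReal.mul_inv (by simp) (by simp), ← pow_add]
  · ring_nf
  · rw [show (2 : ℤ_[2]) ^ (2 * m) * 8 = 4 * 2 ^ (2 * m + 1) by ring,
      show 4 * y * z - 2 ^ (2 * m) * (1 - 1) = 4 * y * z - 4 * 0 by ring]
    exact four_mul_dvd_four_mul_sub_iff hy (by simp)

theorem measure_sqDominantSet_eight_dvd_sub_five (m : ℕ) :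
    μ.prod (μ.prod μ) (sqDominantSet (2 * m) (fun u => 8 ∣ u - 5)) = (2 ^ (3 * m + 3))⁻¹ := by
  rw [measure_sqDominantSet μ (Z := {z | 2 ^ (2 * m + 1) ∣ z - 2 ^ (2 * m)}) ⟨4, by norm_num⟩
    dvd_rfl ⟨2, by norm_num⟩ fun y z hy => ?_, measure_setOf_two_pow_dvd_sub,
    ← ENNReal.mul_inv (by simp) (by simp), ← pow_add]
  · ring_nf
  · rw [show (2 : ℤ_[2]) ^ (2 * m) * 8 = 4 * 2 ^ (2 * m + 1) by ring,
      show 4 * y * z - 2 ^ (2 * m) * (5 - 1) = 4 * y * z - 4 * 2 ^ (2 * m) by ring]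
    exact four_mul_dvd_four_mul_sub_iff hy (two_pow_succ_dvd_two_pow_mul_sub_one hy _)

theorem measure_sqDominantSet_four_dvd_sub_three (m : ℕ) :
    μ.prod (μ.prod μ) (sqDominantSet (2 * m) (fun u => 4 ∣ u - 3)) =
      if m = 0 then 0 else (2 ^ (3 * m + 2))⁻¹ := by
  rcases m with _ | j
  · rw [if_pos rfl, measure_sqDominantSet μ (Z := ∅) ⟨2, by norm_num⟩ ⟨2, by norm_num⟩
      ⟨1, by norm_num⟩ fun y z _ => ?_, measure_empty, mul_zero]
    simp only [Set.mem_empty_iff_false, iff_false]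
    rintro ⟨t, ht⟩
    have h : (2 : ℤ_[2]) * 1 = 2 * (2 * (y * z - t)) := by linear_combination -ht
    exact isUnit_iff_not_two_dvd.mp isUnit_one ⟨_, mul_left_cancel₀ two_ne_zero h⟩
  · rw [if_neg j.succ_ne_zero,
      measure_sqDominantSet μ (Z := {z | 2 ^ (2 * j + 2) ∣ z - 2 ^ (2 * j + 1)}) ⟨2, by norm_num⟩
        ⟨2, by norm_num⟩ ⟨1, by norm_num⟩ fun y z hy => ?_,
      measure_setOf_two_pow_dvd_sub, ← ENNReal.mul_inv (by simp) (by simp), ← pow_add]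
    · ring_nf
    · rw [show (2 : ℤ_[2]) ^ (2 * (j + 1)) * 4 = 4 * 2 ^ (2 * j + 1 + 1) by ring,
        show 4 * y * z - 2 ^ (2 * (j + 1)) * (3 - 1) = 4 * y * z - 4 * 2 ^ (2 * j + 1) by ring]
      exact four_mul_dvd_four_mul_sub_iff hy (two_pow_succ_dvd_two_pow_mul_sub_one hy _)

end Haar

end TwoAdic

open TwoAdic

/-- Lemma 6.3 (the case `v₂(α²) < v₂(4yz)`, expressed as `‖α²‖ > ‖4yz‖`): for the Haar
probability measure `μ` on `ℤ_[2]`, among triples `(α, y, z)` with `y` a unit,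
`‖α²‖ > ‖4yz‖` and `α² + 4yz = 2^k·u` for a unit `u`:
(1) with `u ≡ 1 (mod 8)`, the `μ³`-measure is `2^{-(3k/2+3)}` for even `k` and `0` for odd `k`;
(2) with `u ≡ 5 (mod 8)`, the `μ³`-measure is `2^{-(3k/2+3)}` for even `k` and `0` for odd `k`;
(3) with `u ≡ 3 (mod 4)`, the `μ³`-measure is `2^{-(3k/2+2)}` for even `k ≥ 2`, and `0`
for odd `k` or `k = 0`;
(4) with no constraint on `u`, the `μ³`-measure is `0` whenever `k` is odd. -/
theorem stmt4 (k : ℕ)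
    (μ : Measure ℤ_[2]) [μ.IsAddHaarMeasure] [IsProbabilityMeasure μ] :
    (μ.prod (μ.prod μ)) {p : ℤ_[2] × ℤ_[2] × ℤ_[2] |
        IsUnit p.2.1 ∧ ‖p.1 ^ 2‖ > ‖4 * p.2.1 * p.2.2‖ ∧ ∃ u : ℤ_[2], IsUnit u ∧
          p.1 ^ 2 + 4 * p.2.1 * p.2.2 = 2 ^ k * u ∧ (8 : ℤ_[2]) ∣ u - 1}
      = (if Even k then ((2 : ℝ≥0∞) ^ (3 * k / 2 + 3))⁻¹ else 0) ∧
    (μ.prod (μ.prod μ)) {p : ℤ_[2] × ℤ_[2] × ℤ_[2] |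
        IsUnit p.2.1 ∧ ‖p.1 ^ 2‖ > ‖4 * p.2.1 * p.2.2‖ ∧ ∃ u : ℤ_[2], IsUnit u ∧
          p.1 ^ 2 + 4 * p.2.1 * p.2.2 = 2 ^ k * u ∧ (8 : ℤ_[2]) ∣ u - 5}
      = (if Even k then ((2 : ℝ≥0∞) ^ (3 * k / 2 + 3))⁻¹ else 0) ∧
    (μ.prod (μ.prod μ)) {p : ℤ_[2] × ℤ_[2] × ℤ_[2] |
        IsUnit p.2.1 ∧ ‖p.1 ^ 2‖ > ‖4 * p.2.1 * p.2.2‖ ∧ ∃ u : ℤ_[2], IsUnit u ∧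
          p.1 ^ 2 + 4 * p.2.1 * p.2.2 = 2 ^ k * u ∧ (4 : ℤ_[2]) ∣ u - 3}
      = (if Even k ∧ 2 ≤ k then ((2 : ℝ≥0∞) ^ (3 * k / 2 + 2))⁻¹ else 0) ∧
    (Odd k →
      (μ.prod (μ.prod μ)) {p : ℤ_[2] × ℤ_[2] × ℤ_[2] |
          IsUnit p.2.1 ∧ ‖p.1 ^ 2‖ > ‖4 * p.2.1 * p.2.2‖ ∧ ∃ u : ℤ_[2], IsUnit u ∧
            p.1 ^ 2 + 4 * p.2.1 * p.2.2 = 2 ^ k * u}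
        = 0) := by
  obtain ⟨m, rfl | rfl⟩ := Nat.even_or_odd' k
  · have h3m : 3 * (2 * m) / 2 = 3 * m := by omega
    simp only [even_two_mul, if_true, true_and, h3m]
    refine ⟨measure_sqDominantSet_eight_dvd_sub_one μ m,
      measure_sqDominantSet_eight_dvd_sub_five μ m,
      (measure_sqDominantSet_four_dvd_sub_three μ m).trans ?_,
      fun h => absurd h (Nat.not_odd_iff_even.mpr (even_two_mul m))⟩
    split_ifs <;> first | rfl | omega
  · have hzero (P : ℤ_[2] → Prop) : μ.prod (μ.prod μ) (sqDominantSet (2 * m + 1) P) = 0 := by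
      rw [sqDominantSet_two_mul_add_one, measure_empty]
    simp only [Nat.not_even_two_mul_add_one, if_false, false_and]
    exact ⟨hzero _, hzero _, hzero _, fun _ => by simpa [sqDominantSet] using hzero fun _ => True⟩
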